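/- arXiv:1909.06666 — 4 statements merged into one kernel-verified Lean document; each statement's English description precedes it below -/
import Mathlib

section
/- Let k be a field of characteristic p > 0, G a finite group, and P a p-subgroup of G. The Brauer homomorphism Br_P : (kG)^P → kC_G(P), sending ∑ α_g g to ∑_{g ∈ C_G(P)} α_g g, is a surjective k-algebra homomorphism from the P-fixed points of kG (under conjugation) to the group algebra of the centralizer of P. -/
/-- Conjugation by `x` on the group algebra `kG`, as a `k`-algebra automorphism. -/
noncomputable def conjAct (k : Type*) {G : Type*} [Field k] [Group G] (x : G) :
    MonoidAlgebra k G ≃ₐ[k] MonoidAlgebra k G :=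
  MonoidAlgebra.domCongr k k (MulAut.conj x)

/-- The subalgebra `(kG)^P` of fixed points of `kG` under conjugation by elements of `P`. -/
noncomputable def fixedSubalgebra (k : Type*) {G : Type*} [Field k] [Group G] (P : Subgroup G) :
    Subalgebra k (MonoidAlgebra k G) where
  carrier := {a | ∀ x ∈ P, conjAct k x a = a}
  mul_mem' := fun ha hb x hx => by rw [map_mul, ha x hx, hb x hx]
  add_mem' := fun ha hb x hx => by rw [map_add, ha x hx, hb x hx]
  algebraMap_mem' := fun r x _ => by simp [conjAct]

/-- The Brauer homomorphism as a function: restrict the coefficients to `C_G(P)`. -/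
noncomputable def BrauerMap {k G : Type*} [Field k] [Group G] (P : Subgroup G)
    (a : MonoidAlgebra k G) : MonoidAlgebra k ↥(Subgroup.centralizer (P : Set G)) :=
  MonoidAlgebra.ofCoeff (Finsupp.subtypeDomain (· ∈ Subgroup.centralizer (P : Set G)) a.coeff)

/-! For `c ∈ C_G(P)` the coefficient of `c` in `a * b` is `∑ g, a g * b (g⁻¹ * c)`. If `a` and `b`
are `P`-stable, the summand is invariant under conjugating `g` by `P`; the non-trivial `P`-orbits
have `p`-power size and so contribute nothing in characteristic `p`, which leaves the sum over the
fixed points `g ∈ C_G(P)`: the coefficient of `c` in `Br_P a * Br_P b`. Surjectivity holds because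
`kC_G(P) ⊆ kG` is fixed by `P` and `Br_P` is the identity on it. -/

open Finset MulAction

theorem IsPGroup.sum_eq_sum_fixedPoints {p : ℕ} [Fact p.Prime] {Q X R : Type*} [Group Q]
    [MulAction Q X] [Fintype X] [DecidablePred (· ∈ fixedPoints Q X)]
    [NonAssocSemiring R] [CharP R p] (hQ : IsPGroup p Q) (f : X → R)
    (hf : ∀ (g : Q) (x : X), f (g • x) = f x) :
    ∑ x, f x = ∑ x with x ∈ fixedPoints Q X, f x := by
  classical
  suffices ∑ x with x ∉ fixedPoints Q X, f x = 0 by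
    rw [← sum_filter_add_sum_filter_not univ (· ∈ fixedPoints Q X), this, add_zero]
  refine sum_cancels_of_partition_cancels (orbitRel Q X) fun x hx => ?_
  replace hx : x ∉ fixedPoints Q X := (mem_filter.1 hx).2
  obtain ⟨n, hn⟩ := hQ.card_orbit x
  have hn0 : n ≠ 0 := by
    rintro rfl
    rw [pow_zero, Nat.card_eq_fintype_card, ← mem_fixedPoints_iff_card_orbit_eq_one] at hn
    exact hx hn
  calc _ = ∑ y ∈ (orbit Q x).toFinset, f x := by
        refine sum_congr ?_ fun y hy => ?_
        · ext y
          simp only [mem_filter, mem_univ, true_and, Set.mem_toFinset, orbitRel_apply,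
            and_iff_right_iff_imp]
          intro hy
          rwa [← subsingleton_orbit_iff_mem_fixedPoints, orbit_eq_iff.2 hy,
            subsingleton_orbit_iff_mem_fixedPoints]
        · obtain ⟨g, rfl⟩ := Set.mem_toFinset.1 hy
          exact hf g x
    _ = 0 := by
      rw [sum_const, nsmul_eq_mul, Set.toFinset_card, ← Nat.card_eq_fintype_card, hn,
        (CharP.cast_eq_zero_iff R p _).2 (dvd_pow_self p hn0), zero_mul]

theorem IsPGroup.sum_eq_sum_centralizer {p : ℕ} [Fact p.Prime] {G R : Type*} [Group G]
    [Fintype G] [NonAssocSemiring R] [CharP R p] {P : Subgroup G}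
    [DecidablePred (· ∈ Subgroup.centralizer (P : Set G))] (hP : IsPGroup p P) (f : G → R)
    (hf : ∀ x ∈ P, ∀ g, f (x * g * x⁻¹) = f g) :
    ∑ g, f g = ∑ g with g ∈ Subgroup.centralizer (P : Set G), f g := by
  let Q := P.map (ConjAct.toConjAct : G ≃* ConjAct G).toMonoidHom
  have hQ : IsPGroup p Q := hP.of_equiv (P.equivMapOfInjective _ ConjAct.toConjAct.injective)
  have hfix : fixedPoints Q G = Subgroup.centralizer (P : Set G) := by
    ext g
    simp only [mem_fixedPoints, Subtype.forall, Q, Subgroup.mem_map, forall_exists_index,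
      and_imp, forall_apply_eq_imp_iff₂, Subgroup.mk_smul, SetLike.mem_coe,
      Subgroup.mem_centralizer_iff, ConjAct.smul_def, MulEquiv.coe_toMonoidHom,
      ConjAct.ofConjAct_toConjAct, mul_inv_eq_iff_eq_mul]
  classical
  convert hQ.sum_eq_sum_fixedPoints f ?_ using 3
  · rw [hfix, SetLike.mem_coe]
  · rintro ⟨_, x, hx, rfl⟩ g
    exact hf x hx g

theorem conj_eq_self_of_mem_centralizer {G : Type*} [Group G] {S : Set G} {x g : G} (hx : x ∈ S)
    (hg : g ∈ Subgroup.centralizer S) : x * g * x⁻¹ = g := by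
  rw [mul_inv_eq_iff_eq_mul, Subgroup.mem_centralizer_iff.1 hg x hx]

theorem MonoidAlgebra.coeff_mul_eq_sum {R G : Type*} [Semiring R] [Group G] [Fintype G]
    (a b : MonoidAlgebra R G) (g : G) :
    (a * b).coeff g = ∑ h, a.coeff h * b.coeff (h⁻¹ * g) := by
  rw [coeff_mul_apply_left, Finsupp.sum_fintype _ _ fun _ => zero_mul _]

section BrauerMap

variable {k G : Type*} [Field k] [Group G] {P : Subgroup G}

local notation "C" => Subgroup.centralizer (P : Set G)

theorem mem_fixedSubalgebra_iff {a : MonoidAlgebra k G} :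
    a ∈ fixedSubalgebra k P ↔ ∀ x ∈ P, ∀ g, a.coeff (x * g * x⁻¹) = a.coeff g := by
  have key (x : G) : conjAct k x a = a ↔ ∀ g, a.coeff (x⁻¹ * g * x) = a.coeff g := by
    simp [conjAct, MonoidAlgebra.ext_iff, Finsupp.ext_iff, MulAut.conj_symm_apply]
  exact ⟨fun h x hx g => by simpa using (key x⁻¹).1 (h _ (inv_mem hx)) g,
    fun h x hx => (key x).2 fun g => by simpa using h _ (inv_mem hx) g⟩

@[simp]
theorem coeff_brauerMap (a : MonoidAlgebra k G) (h : C) :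
    (BrauerMap P a).coeff h = a.coeff h :=
  rfl

variable (k P) in
noncomputable def brauerLinearMap : MonoidAlgebra k G →ₗ[k] MonoidAlgebra k C where
  toFun := BrauerMap P
  map_add' _ _ := by ext; simp
  map_smul' _ _ := by ext; simp

theorem brauerMap_one : BrauerMap P (1 : MonoidAlgebra k G) = 1 := by
  ext h
  rcases eq_or_ne h 1 with rfl | hh
  · simp
  · have hh' : (h : G) ≠ 1 := by simpa using hh
    simp [MonoidAlgebra.one_def, hh, hh']

theorem brauerMap_mul {p : ℕ} [Fact p.Prime] [CharP k p] [Fintype G] (hP : IsPGroup p P)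
    {a b : MonoidAlgebra k G} (ha : a ∈ fixedSubalgebra k P) (hb : b ∈ fixedSubalgebra k P) :
    BrauerMap P (a * b) = BrauerMap P a * BrauerMap P b := by
  classical
  ext ⟨c, hc⟩
  have hsummand (x : G) (hx : x ∈ P) (g : G) :
      a.coeff (x * g * x⁻¹) * b.coeff ((x * g * x⁻¹)⁻¹ * c) = a.coeff g * b.coeff (g⁻¹ * c) := by
    have hconj : (x * g * x⁻¹)⁻¹ * c = x * (g⁻¹ * c) * x⁻¹ := by
      conv_lhs => rw [← conj_eq_self_of_mem_centralizer hx hc]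
      group
    rw [hconj, mem_fixedSubalgebra_iff.1 ha x hx, mem_fixedSubalgebra_iff.1 hb x hx]
  calc (a * b).coeff c
      = ∑ g with g ∈ C, a.coeff g * b.coeff (g⁻¹ * c) := by
        rw [MonoidAlgebra.coeff_mul_eq_sum, hP.sum_eq_sum_centralizer _ hsummand]
    _ = ∑ h : C, a.coeff h * b.coeff (h⁻¹ * c) :=
        sum_subtype _ (by simp) fun g => a.coeff g * b.coeff (g⁻¹ * c)
    _ = (BrauerMap P a * BrauerMap P b).coeff ⟨c, hc⟩ := by
        simp [MonoidAlgebra.coeff_mul_eq_sum]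

theorem mapDomain_subtype_mem_fixedSubalgebra (b : MonoidAlgebra k C) :
    MonoidAlgebra.mapDomain Subtype.val b ∈ fixedSubalgebra k P := by
  refine mem_fixedSubalgebra_iff.2 fun x hx g => ?_
  by_cases hg : x * g * x⁻¹ = g
  · rw [hg]
  · simp only [MonoidAlgebra.coeff_mapDomain]
    rw [Finsupp.mapDomain_of_notMem_range, Finsupp.mapDomain_of_notMem_range] <;>
      rw [Subtype.range_coe_subtype, Set.mem_ofPred_eq]
    · exact fun hg' => hg (conj_eq_self_of_mem_centralizer hx hg')
    · intro hg'
      have hconj := conj_eq_self_of_mem_centralizer (inv_mem hx) hg'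
      exact hg (by simpa [mul_assoc] using hconj.symm)

theorem brauerMap_mapDomain_subtype (b : MonoidAlgebra k C) :
    BrauerMap P (MonoidAlgebra.mapDomain Subtype.val b) = b := by
  ext h
  simp [Finsupp.mapDomain_apply Subtype.val_injective]

end BrauerMap

/-- For a field `k` of characteristic `p > 0`, a finite group `G` and a
`p`-subgroup `P` of `G`, the Brauer homomorphism `Br_P : (kG)^P → kC_G(P)`,
`∑ α_g g ↦ ∑_{g ∈ C_G(P)} α_g g`, is a surjective `k`-algebra homomorphism. -/
theorem brauer_hom_surjective_algHom
    (p : ℕ) [Fact p.Prime] (k G : Type*) [Field k] [CharP k p] [Group G] [Fintype G]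
    (P : Subgroup G) (hP : IsPGroup p P) :
    ∃ f : fixedSubalgebra k P →ₐ[k] MonoidAlgebra k ↥(Subgroup.centralizer (P : Set G)),
      (∀ (a : fixedSubalgebra k P), f a = BrauerMap P (a : MonoidAlgebra k G)) ∧
      Function.Surjective f :=
  ⟨AlgHom.ofLinearMap ((brauerLinearMap k P).comp (fixedSubalgebra k P).val.toLinearMap)
      brauerMap_one (fun a b => brauerMap_mul hP a.2 b.2),
    fun _ => rfl,
    fun b => ⟨⟨_, mapDomain_subtype_mem_fixedSubalgebra b⟩, brauerMap_mapDomain_subtype b⟩⟩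
end

section
/- Let L/K be a finite Galois extension of fields with Galois group Γ, acting coefficientwise on the group algebra LG of a finite group G. If b is a block idempotent (primitive central idempotent) of LG with stabilizer Γ_b in Γ, then b̃ := ∑_{γ ∈ Γ/Γ_b} γ(b) is a block idempotent of KG. -/
/-!
Distinct blocks of a ring are orthogonal, so the sum `s` of the distinct Galois conjugates of a
block `b` of `LG` is a central idempotent with `s * c = c` for each conjugate `c`. It is fixed by
the Galois group, hence has coefficients in `K`, i.e. `s` lies in `KG`. If `s = f₁ + f₂` with
orthogonal central idempotents of `KG`, then `b f₁ ∈ {0, b}` since `b` is a block of `LG`; as `f₁`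
is Galois-fixed, `b f₁ = 0` forces `c f₁ = 0` for every conjugate `c`, hence `f₁ = s f₁ = 0`.
-/

/-- A block idempotent of a ring: a primitive idempotent of its center, i.e. a nonzero central
idempotent which cannot be written as a sum of two nonzero orthogonal central idempotents. -/
def IsBlockIdempotent {R : Type*} [Ring R] (b : R) : Prop :=
  b ∈ Set.center R ∧ IsIdempotentElem b ∧ b ≠ 0 ∧
    ∀ c₁ c₂ : R, c₁ ∈ Set.center R → c₂ ∈ Set.center R →
      IsIdempotentElem c₁ → IsIdempotentElem c₂ → c₁ * c₂ = 0 → b = c₁ + c₂ →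
        c₁ = 0 ∨ c₂ = 0

/-- The coefficientwise action of a Galois automorphism `γ` on the group algebra `LG`. -/
noncomputable def galAct {K L : Type*} [Field K] [Field L] [Algebra K L] {G : Type*}
    (γ : L ≃ₐ[K] L) (a : MonoidAlgebra L G) : MonoidAlgebra L G :=
  MonoidAlgebra.ofCoeff (Finsupp.mapRange γ (map_zero γ) a.coeff)

/-- The sum of the distinct Galois conjugates `γ(b)`, `γ ∈ Γ`, of `b ∈ LG`. -/
noncomputable def galOrbitSum (K : Type*) {L : Type*} [Field K] [Field L] [Algebra K L]
    [FiniteDimensional K L] {G : Type*} (b : MonoidAlgebra L G) : MonoidAlgebra L G :=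
  ∑ c ∈ (Set.toFinite (Set.range fun γ : L ≃ₐ[K] L => galAct γ b)).toFinset, c

section BlockIdempotent

variable {R : Type*} [Ring R]

theorem IsBlockIdempotent.map {S : Type*} [Ring S] (σ : R ≃+* S) {e : R}
    (he : IsBlockIdempotent e) : IsBlockIdempotent (σ e) := by
  obtain ⟨hc, hi, hne, hprim⟩ := he
  refine ⟨MulEquivClass.apply_mem_center σ hc, hi.map σ, (map_ne_zero_iff σ σ.injective).2 hne,
    fun c₁ c₂ hc₁ hc₂ hi₁ hi₂ h₁₂ hsum => ?_⟩
  have := hprim (σ.symm c₁) (σ.symm c₂) (MulEquivClass.apply_mem_center σ.symm hc₁)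
    (MulEquivClass.apply_mem_center σ.symm hc₂) (hi₁.map σ.symm) (hi₂.map σ.symm)
    (by rw [← map_mul, h₁₂, map_zero]) (by rw [← map_add, ← hsum, σ.symm_apply_apply])
  simpa only [map_eq_zero_iff σ.symm σ.symm.injective] using this

theorem IsBlockIdempotent.mul_eq_zero_or_mul_eq_self {e f : R} (he : IsBlockIdempotent e)
    (hf : f ∈ Set.center R) (hfi : IsIdempotentElem f) : e * f = 0 ∨ e * f = e := by
  obtain ⟨hec, hei, -, hprim⟩ := he
  have hcomm : Commute e f := (hf.comm e).symm
  have hsplit : e = e * f + e * (1 - f) := by rw [mul_sub, mul_one, add_sub_cancel]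
  have horth : e * f * (e * (1 - f)) = 0 := by
    rw [mul_assoc, ← mul_assoc f, ← hcomm.eq, mul_assoc, ← mul_assoc, hfi.mul_one_sub_self,
      mul_zero]
  rcases hprim (e * f) (e * (1 - f)) (Set.mul_mem_center hec hf)
    (Set.mul_mem_center hec ((Subring.center R).sub_mem (Set.one_mem_center) hf))
    (hei.mul_of_commute hcomm hfi) (hei.mul_of_commute ((Commute.one_right e).sub_right hcomm)
      hfi.one_sub) horth hsplit with h | h
  · exact Or.inl h
  · right
    calc e * f = e * f + e * (1 - f) := by rw [h, add_zero]
      _ = e := hsplit.symm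

theorem IsBlockIdempotent.mul_eq_zero_of_ne {e f : R} (he : IsBlockIdempotent e)
    (hf : IsBlockIdempotent f) (hne : e ≠ f) : e * f = 0 := by
  have hcomm : f * e = e * f := (hf.1.comm e).eq
  rcases he.mul_eq_zero_or_mul_eq_self hf.1 hf.2.1 with h | hef
  · exact h
  rcases hf.mul_eq_zero_or_mul_eq_self he.1 he.2.1 with h | hfe
  · rwa [hcomm] at h
  · exact absurd (hef.symm.trans (hcomm ▸ hfe)) hne

theorem sum_mul_eq_self_of_isBlockIdempotent {S : Finset R}
    (hS : ∀ c ∈ S, IsBlockIdempotent c) {c : R} (hc : c ∈ S) : (∑ d ∈ S, d) * c = c := by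
  rw [Finset.sum_mul, Finset.sum_eq_single_of_mem c hc
    fun d hd hne => (hS d hd).mul_eq_zero_of_ne (hS c hc) hne]
  exact (hS c hc).2.1.eq

end BlockIdempotent

section Descent

variable {A B : Type*} [Ring A] [Ring B]

theorem isBlockIdempotent_of_map_eq_sum (φ : A →+* B) (hφ : Function.Injective φ)
    (hφc : ∀ x ∈ Set.center A, φ x ∈ Set.center B) {b : B} (hb : IsBlockIdempotent b)
    {S : Finset B} (hbS : b ∈ S) (hS : ∀ c ∈ S, ∃ σ : B ≃+* B, (∀ x, σ (φ x) = φ x) ∧ σ b = c)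
    {a : A} (ha : φ a = ∑ c ∈ S, c) : IsBlockIdempotent a := by
  have hblock : ∀ c ∈ S, IsBlockIdempotent c := fun c hc => by
    obtain ⟨σ, -, rfl⟩ := hS c hc
    exact hb.map σ
  have hsum_mul : ∀ c ∈ S, φ a * c = c := fun c hc => by
    rw [ha, sum_mul_eq_self_of_isBlockIdempotent hblock hc]
  have hsum_center : φ a ∈ Set.center B :=
    ha ▸ (Subsemiring.center B).sum_mem fun c hc => (hblock c hc).1
  -- `c φ(f) = σ (b φ(f))` for a conjugate `c = σ b`, since `σ` fixes `φ(A)`.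
  have hann : ∀ f : A, b * φ f = 0 → a * f = 0 := by
    intro f hf
    apply hφ
    rw [map_mul, ha, Finset.sum_mul, map_zero]
    refine Finset.sum_eq_zero fun c hc => ?_
    obtain ⟨σ, hσφ, rfl⟩ := hS c hc
    rw [← hσφ f, ← map_mul, hf, map_zero]
  refine ⟨?_, ?_, ?_, ?_⟩
  · refine Semigroup.mem_center_iff.2 fun y => hφ ?_
    rw [map_mul, map_mul]
    exact Semigroup.mem_center_iff.1 hsum_center (φ y)
  · refine hφ ?_
    rw [map_mul]
    conv_lhs => arg 2; rw [ha]
    rw [Finset.mul_sum, Finset.sum_congr rfl hsum_mul, ha]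
  · rintro rfl
    exact hb.2.2.1 (by rw [← hsum_mul b hbS, map_zero, zero_mul])
  · intro f₁ f₂ hf₁ hf₂ hi₁ hi₂ h₁₂ hsum
    have ha₁ : a * f₁ = f₁ := by
      rw [hsum, add_mul, hi₁.eq, (hf₂.comm f₁).eq, h₁₂, add_zero]
    have ha₂ : a * f₂ = f₂ := by rw [hsum, add_mul, hi₂.eq, h₁₂, zero_add]
    rcases hb.mul_eq_zero_or_mul_eq_self (hφc f₁ hf₁) (hi₁.map φ) with h | h
    · exact Or.inl (ha₁ ▸ hann f₁ h)
    · refine Or.inr (ha₂ ▸ hann f₂ ?_)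
      rw [← h, mul_assoc, ← map_mul, h₁₂, map_zero, mul_zero]

end Descent

section GroupAlgebra

variable {G : Type*} {K L : Type*} [Field K] [Field L] [Algebra K L]

theorem mem_galOrbit_iff [FiniteDimensional K L] {b c : MonoidAlgebra L G} :
    c ∈ (Set.toFinite (Set.range fun γ : L ≃ₐ[K] L => galAct γ b)).toFinset ↔
      ∃ γ : L ≃ₐ[K] L, galAct γ b = c := by
  simp

variable [Monoid G]

theorem MonoidAlgebra.mem_center_of_commute_of {R : Type*} [CommSemiring R]
    {x : MonoidAlgebra R G} (h : ∀ g, Commute (MonoidAlgebra.of R G g) x) :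
    x ∈ Set.center (MonoidAlgebra R G) := by
  refine Semigroup.mem_center_iff.2 fun y => ?_
  induction y using MonoidAlgebra.induction_on with
  | of g => exact (h g).eq
  | add y z hy hz => rw [add_mul, mul_add, hy, hz]
  | smul r y hy => rw [smul_mul_assoc, mul_smul_comm, hy]

theorem MonoidAlgebra.mapRingHom_mem_center {R S : Type*} [CommSemiring R] [CommSemiring S]
    (f : R →+* S) {x : MonoidAlgebra R G} (hx : x ∈ Set.center (MonoidAlgebra R G)) :
    MonoidAlgebra.mapRingHom G f x ∈ Set.center (MonoidAlgebra S G) :=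
  mem_center_of_commute_of fun g => by
    simpa using ((hx.comm (MonoidAlgebra.of R G g)).symm.map (MonoidAlgebra.mapRingHom G f))

theorem galAct_eq_mapRangeAlgAut (γ : L ≃ₐ[K] L) :
    galAct (G := G) γ = MonoidAlgebra.mapRangeAlgAut K G γ := by
  ext a g
  simp [galAct]

theorem galAct_one (a : MonoidAlgebra L G) : galAct (1 : L ≃ₐ[K] L) a = a := by
  rw [galAct_eq_mapRangeAlgAut, map_one, AlgEquiv.one_apply]

theorem galAct_mul (δ γ : L ≃ₐ[K] L) (a : MonoidAlgebra L G) :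
    galAct (δ * γ) a = galAct δ (galAct γ a) := by
  simp only [galAct_eq_mapRangeAlgAut, map_mul, AlgEquiv.mul_apply]

theorem galAct_mapRingHom_algebraMap (γ : L ≃ₐ[K] L) (x : MonoidAlgebra K G) :
    galAct γ (MonoidAlgebra.mapRingHom G (algebraMap K L) x) =
      MonoidAlgebra.mapRingHom G (algebraMap K L) x := by
  ext g
  simp [galAct]

theorem mem_range_mapRingHom_algebraMap_of_forall_galAct_eq [IsGalois K L]
    {s : MonoidAlgebra L G} (hs : ∀ γ : L ≃ₐ[K] L, galAct γ s = s) :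
    s ∈ Set.range (MonoidAlgebra.mapRingHom G (algebraMap K L)) := by
  rw [MonoidAlgebra.coe_mapRingHom, MonoidAlgebra.range_map]
  refine fun g => (InfiniteGalois.mem_range_algebraMap_iff_fixed _).2 fun γ => ?_
  simpa [galAct] using congrArg (MonoidAlgebra.coeff · g) (hs γ)

theorem galAct_galOrbitSum [FiniteDimensional K L] (δ : L ≃ₐ[K] L) (b : MonoidAlgebra L G) :
    galAct δ (galOrbitSum K b) = galOrbitSum K b := by
  rw [galOrbitSum, galAct_eq_mapRangeAlgAut, map_sum]
  refine Finset.sum_equiv (MonoidAlgebra.mapRangeAlgAut K G δ).toEquiv (fun c => ?_) fun _ _ => rfl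
  rw [mem_galOrbit_iff, mem_galOrbit_iff, AlgEquiv.toEquiv_eq_coe, EquivLike.coe_coe,
    ← galAct_eq_mapRangeAlgAut]
  constructor
  · rintro ⟨γ, rfl⟩
    exact ⟨δ * γ, galAct_mul δ γ b⟩
  · rintro ⟨γ, hγ⟩
    exact ⟨δ⁻¹ * γ, by rw [galAct_mul, hγ, ← galAct_mul, inv_mul_cancel, galAct_one]⟩

end GroupAlgebra

theorem galOrbitSum_isBlockIdempotent_general
    (K L : Type*) [Field K] [Field L] [Algebra K L] [FiniteDimensional K L] [IsGalois K L]
    (G : Type*) [Group G]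
    (b : MonoidAlgebra L G) (hb : IsBlockIdempotent b) :
    ∃ b' : MonoidAlgebra K G,
      Finsupp.mapRange (algebraMap K L) (map_zero _) b'.coeff = (galOrbitSum K b).coeff ∧
      IsBlockIdempotent b' := by
  obtain ⟨b', hb'⟩ := mem_range_mapRingHom_algebraMap_of_forall_galAct_eq (K := K)
    (galAct_galOrbitSum · b)
  refine ⟨b', congrArg MonoidAlgebra.coeff hb', ?_⟩
  refine isBlockIdempotent_of_map_eq_sum _
    (MonoidAlgebra.map_injective _ (algebraMap K L).injective)
    (fun _ => MonoidAlgebra.mapRingHom_mem_center _) hb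
    (mem_galOrbit_iff.2 ⟨1, galAct_one b⟩) (fun c hc => ?_) hb'
  obtain ⟨γ, rfl⟩ := mem_galOrbit_iff.1 hc
  exact ⟨(MonoidAlgebra.mapRangeAlgAut K G γ).toRingEquiv,
    fun x => by simpa [galAct_eq_mapRangeAlgAut] using galAct_mapRingHom_algebraMap γ x,
    by simp [galAct_eq_mapRangeAlgAut]⟩

/-- For a finite Galois extension `L/K` of fields, with the Galois group acting
coefficientwise on `LG`, and a block idempotent `b` of `LG`, the sum `b̃` of the distinct Galois
conjugates of `b` is a block idempotent of `KG` (i.e. it is the image of a block idempotent of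
`KG` under the coefficient embedding `KG → LG`). -/
theorem galOrbitSum_isBlockIdempotent
    (K L : Type*) [Field K] [Field L] [Algebra K L] [FiniteDimensional K L] [IsGalois K L]
    (G : Type*) [Group G] [Fintype G]
    (b : MonoidAlgebra L G) (hb : IsBlockIdempotent b) :
    ∃ b' : MonoidAlgebra K G,
      Finsupp.mapRange (algebraMap K L) (map_zero _) b'.coeff = (galOrbitSum K b).coeff ∧
      IsBlockIdempotent b' :=
  galOrbitSum_isBlockIdempotent_general K L G b hb
end

section
/- Let F ⊆ F̃ be fusion systems over a finite p-group P and let σ ∈ Aut_{F̃}(P) be such that any two F̃-isomorphic subgroups Q, Q' of P satisfy: there exist Q'' ≤ P and i ∈ ℤ with Q F-isomorphic to Q'' and Q' = σ^i(Q''). Then a subgroup Q of P is fully F-centralized if and only if it is fully F̃-centralized, and fully F-normalized if and only if fully F̃-normalized. -/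
/-- The condition that conjugation by `x` maps the subgroup `Q` into the subgroup `R`. -/
def ConjMapsTo {P : Type*} [Group P] (x : P) (Q R : Subgroup P) : Prop :=
  ∀ q ∈ Q, x * q * x⁻¹ ∈ R

/-- The homomorphism `Q → R` induced by conjugation by `x`. -/
def conjHom {P : Type*} [Group P] (x : P) (Q R : Subgroup P) (h : ConjMapsTo x Q R) :
    ↥Q →* ↥R where
  toFun q := ⟨x * q * x⁻¹, h q q.2⟩
  map_one' := by ext; simp
  map_mul' a b := by ext; simp [mul_assoc]
  
/-- The image `φ(Q) ≤ P` of a homomorphism `φ : Q → R` between subgroups of `P`. -/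
def imgSubgroup {P : Type*} [Group P] {Q R : Subgroup P} (φ : ↥Q →* ↥R) : Subgroup P :=
  (R.subtype.comp φ).range

/-- The corestriction `Q → φ(Q)`, `u ↦ φ(u)`, of `φ : Q → R`. -/
def corestrict {P : Type*} [Group P] {Q R : Subgroup P} (φ : ↥Q →* ↥R) :
    ↥Q →* ↥(imgSubgroup φ) :=
  (R.subtype.comp φ).rangeRestrict

/-- A fusion system over a finite `p`-group `P` (Definition I.2.1 of Aschbacher–Kessar–Oliver):
a category whose objects are the subgroups of `P` and whose morphisms are injective group
homomorphisms, including all conjugation maps induced by elements of `P`, closed under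
composition, and such that each morphism factors as an isomorphism onto its image whose
inverse is again a morphism. -/
structure FusionSystem (P : Type*) [Group P] where
  Hom : ∀ _Q _R : Subgroup P, Set (↥_Q →* ↥_R)
  inj_mem : ∀ {Q R : Subgroup P}, ∀ φ ∈ Hom Q R, Function.Injective φ
  conj_mem : ∀ (x : P) (Q R : Subgroup P) (h : ConjMapsTo x Q R), conjHom x Q R h ∈ Hom Q R
  comp_mem : ∀ {Q R S : Subgroup P}, ∀ φ ∈ Hom Q R, ∀ ψ ∈ Hom R S, ψ.comp φ ∈ Hom Q S
  restrict_mem : ∀ {Q R : Subgroup P}, ∀ φ ∈ Hom Q R, corestrict φ ∈ Hom Q (imgSubgroup φ)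
  inv_mem : ∀ {Q R : Subgroup P}, ∀ φ ∈ Hom Q R,
    ∃ ψ ∈ Hom (imgSubgroup φ) Q, ∀ q : ↥Q, ψ (corestrict φ q) = q

namespace FusionSystem

variable {P : Type*} [Group P]

/-- Containment of fusion systems over `P`. -/
def LE (F F' : FusionSystem P) : Prop := ∀ Q R : Subgroup P, F.Hom Q R ⊆ F'.Hom Q R

/-- `Q` and `R` are `F`-isomorphic: some morphism in `Hom_F(Q,R)` is an isomorphism. -/
def IsIso (F : FusionSystem P) (Q R : Subgroup P) : Prop :=
  ∃ φ ∈ F.Hom Q R, Function.Surjective φ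

/-- `Q` is fully `F`-centralized: `|C_P(Q)| ≥ |C_P(Q')|` for all `Q'` `F`-isomorphic to `Q`. -/
def FullyCentralized (F : FusionSystem P) (Q : Subgroup P) : Prop :=
  ∀ Q' : Subgroup P, F.IsIso Q Q' →
    Nat.card ↥(Subgroup.centralizer (Q' : Set P)) ≤ Nat.card ↥(Subgroup.centralizer (Q : Set P))

/-- `Q` is fully `F`-normalized: `|N_P(Q)| ≥ |N_P(Q')|` for all `Q'` `F`-isomorphic to `Q`. -/
def FullyNormalized (F : FusionSystem P) (Q : Subgroup P) : Prop :=
  ∀ Q' : Subgroup P, F.IsIso Q Q' → Nat.card ↥(Subgroup.normalizer (Q' : Set P)) ≤ Nat.card ↥(Subgroup.normalizer (Q : Set P))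

/-- `Q` is `F`-centric: `C_P(R) = Z(R)` for all `R` `F`-isomorphic to `Q`. -/
def Centric (F : FusionSystem P) (Q : Subgroup P) : Prop :=
  ∀ R : Subgroup P, F.IsIso Q R →
    Subgroup.centralizer (R : Set P) = R ⊓ Subgroup.centralizer (R : Set P)

end FusionSystem

/-- An automorphism `σ` of `P`, as a morphism `P → P` (i.e. `⊤ → ⊤`). -/
def topHom {P : Type*} [Group P] (σ : MulAut P) : ↥(⊤ : Subgroup P) →* ↥(⊤ : Subgroup P) :=
  (σ.toMonoidHom.comp (⊤ : Subgroup P).subtype).codRestrict ⊤ (fun _ => trivial)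

theorem Subgroup.map_equiv_centralizer_eq {G N : Type*} [Group G] [Group N] (S : Set G)
    (f : G ≃* N) :
    (Subgroup.centralizer S).map f.toMonoidHom = Subgroup.centralizer (f '' S) := by
  ext x
  simp only [Subgroup.mem_map, Subgroup.mem_centralizer_iff]
  constructor
  · rintro ⟨y, hy, rfl⟩ _ ⟨s, hs, rfl⟩
    change f s * f y = f y * f s
    rw [← map_mul, ← map_mul, hy s hs]
  · intro h
    refine ⟨f.symm x, fun m hm => f.injective ?_, f.apply_symm_apply x⟩
    rw [map_mul, map_mul, f.apply_symm_apply, h (f m) ⟨m, hm, rfl⟩]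

theorem Subgroup.card_centralizer_map_equiv {G N : Type*} [Group G] [Group N] (f : G ≃* N)
    (Q : Subgroup G) :
    Nat.card (Subgroup.centralizer (Q.map f.toMonoidHom : Set N)) =
      Nat.card (Subgroup.centralizer (Q : Set G)) := by
  rw [← Subgroup.card_map_of_injective (K := Subgroup.centralizer (Q : Set G))
    (f := f.toMonoidHom) f.injective, Subgroup.map_equiv_centralizer_eq]
  rfl

theorem Subgroup.card_normalizer_map_equiv {G N : Type*} [Group G] [Group N] (f : G ≃* N)
    (Q : Subgroup G) :
    Nat.card (Subgroup.normalizer (Q.map f.toMonoidHom : Set N)) =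
      Nat.card (Subgroup.normalizer (Q : Set G)) := by
  rw [← Subgroup.map_equiv_normalizer_eq]
  exact Subgroup.card_map_of_injective f.injective

namespace FusionSystem

variable {P : Type*} [Group P]

theorem IsIso.of_le {F F' : FusionSystem P} (hle : F.LE F') {Q R : Subgroup P}
    (h : F.IsIso Q R) : F'.IsIso Q R :=
  let ⟨φ, hφ, hsurj⟩ := h
  ⟨φ, hle Q R hφ, hsurj⟩

theorem forall_isIso_le_iff_of_le {F Ftilde : FusionSystem P} (hle : F.LE Ftilde)
    (σ : MulAut P)
    (hiso : ∀ Q Q' : Subgroup P, Ftilde.IsIso Q Q' →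
      ∃ (Q'' : Subgroup P) (i : ℤ), F.IsIso Q Q'' ∧ Q' = Q''.map (σ ^ i).toMonoidHom)
    {c : Subgroup P → ℕ} (hc : ∀ (R : Subgroup P) (i : ℤ), c (R.map (σ ^ i).toMonoidHom) = c R)
    (Q : Subgroup P) :
    (∀ Q', F.IsIso Q Q' → c Q' ≤ c Q) ↔ (∀ Q', Ftilde.IsIso Q Q' → c Q' ≤ c Q) := by
  refine ⟨fun h Q' hQ' => ?_, fun h Q' hQ' => h Q' (hQ'.of_le hle)⟩
  obtain ⟨Q'', i, hQ'', rfl⟩ := hiso Q Q' hQ'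
  exact (hc Q'' i).trans_le (h Q'' hQ'')

end FusionSystem

theorem fully_centralized_normalized_F_iff_Ftilde_general
    (P : Type*) [Group P]
    (F Ftilde : FusionSystem P) (hle : FusionSystem.LE F Ftilde)
    (σ : MulAut P)
    (hiso : ∀ Q Q' : Subgroup P, Ftilde.IsIso Q Q' →
      ∃ (Q'' : Subgroup P) (i : ℤ), F.IsIso Q Q'' ∧ Q' = Q''.map (σ ^ i).toMonoidHom) :
    ∀ Q : Subgroup P,
      (F.FullyCentralized Q ↔ Ftilde.FullyCentralized Q) ∧
      (F.FullyNormalized Q ↔ Ftilde.FullyNormalized Q) := fun Q =>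
  ⟨FusionSystem.forall_isIso_le_iff_of_le hle σ hiso
      (fun R i => Subgroup.card_centralizer_map_equiv (σ ^ i) R) Q,
    FusionSystem.forall_isIso_le_iff_of_le hle σ hiso
      (fun R i => Subgroup.card_normalizer_map_equiv (σ ^ i) R) Q⟩

/-- Let `F ⊆ F̃` be fusion systems over a finite `p`-group `P` and
`σ ∈ Aut_F̃(P)` be such that any two `F̃`-isomorphic subgroups `Q, Q'` satisfy: there are
`Q'' ≤ P` and `i ∈ ℤ` with `Q` `F`-isomorphic to `Q''` and `Q' = σ^i(Q'')`. Then `Q` is fully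
`F`-centralized iff it is fully `F̃`-centralized, and fully `F`-normalized iff fully
`F̃`-normalized. -/
theorem fully_centralized_normalized_F_iff_Ftilde
    (p : ℕ) [Fact p.Prime] (P : Type*) [Group P] [Finite P] (hP : IsPGroup p P)
    (F Ftilde : FusionSystem P) (hle : FusionSystem.LE F Ftilde)
    (σ : MulAut P) (hσ : topHom σ ∈ Ftilde.Hom ⊤ ⊤)
    (hiso : ∀ Q Q' : Subgroup P, Ftilde.IsIso Q Q' →
      ∃ (Q'' : Subgroup P) (i : ℤ), F.IsIso Q Q'' ∧ Q' = Q''.map (σ ^ i).toMonoidHom) :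
    ∀ Q : Subgroup P,
      (F.FullyCentralized Q ↔ Ftilde.FullyCentralized Q) ∧
      (F.FullyNormalized Q ↔ Ftilde.FullyNormalized Q) :=
  fully_centralized_normalized_F_iff_Ftilde_general P F Ftilde hle σ hiso
end

section
/- Let F ⊆ F̃ be fusion systems over a finite p-group P with F̃ = ⟨F, σ⟩ for some σ ∈ Aut_{F̃}(P), such that every φ ∈ Hom_{F̃}(Q,P) factors as σ^i ∘ ψ with ψ ∈ Hom_F(Q,P), and such that fully normalized subgroups for F and F̃ coincide. If F satisfies the extension axiom, then F̃ satisfies the extension axiom. -/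
/-- The subset `N_φ ⊆ N_P(Q)` attached to a morphism `φ` with domain `Q`: all `y ∈ N_P(Q)` for
which there is `z ∈ N_P(φ(Q))` with `φ ∘ c_y = c_z ∘ φ` on `Q`. -/
def NphiSet {P : Type*} [Group P] {Q R : Subgroup P} (φ : ↥Q →* ↥R) : Set P :=
  {y | ∃ hy : ∀ q ∈ Q, y * q * y⁻¹ ∈ Q, y ∈ Subgroup.normalizer (Q : Set P) ∧
    ∃ z ∈ Subgroup.normalizer (imgSubgroup φ : Set P), ∀ (q : P) (hq : q ∈ Q),
      (φ ⟨y * q * y⁻¹, hy q hq⟩ : P) = z * (φ ⟨q, hq⟩ : P) * z⁻¹}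

/-- The extension axiom for a fusion system `F` over `P`: for every `Q ≤ P` and
`φ ∈ Hom_F(Q,P)` with `φ(Q)` fully `F`-normalized, `φ` extends to a morphism in `F`
defined on `N_φ`. -/
def FusionSystem.ExtensionAxiom {P : Type*} [Group P] (F : FusionSystem P) : Prop :=
  ∀ (Q : Subgroup P) (φ : ↥Q →* ↥(⊤ : Subgroup P)), φ ∈ F.Hom Q ⊤ →
    F.FullyNormalized (imgSubgroup φ) →
    ∀ N : Subgroup P, (N : Set P) = NphiSet φ →
      ∃ ψ ∈ F.Hom N ⊤, ∀ (q : P) (hq : q ∈ Q) (hq' : q ∈ N),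
        (ψ ⟨q, hq'⟩ : P) = (φ ⟨q, hq⟩ : P)

/-!
Write `φ = σ^i ∘ ψ` with `ψ` in `F`. The automorphism `σ^i` of `P` lies in `F̃` and carries
`ψ(Q)` onto `φ(Q)`, so the two are `F̃`-isomorphic with normalizers of equal order: hence `ψ(Q)`
is fully `F̃`-normalized, i.e. fully `F`-normalized. Conjugation relations transport along `σ^i`,
so `N_φ = N_ψ`; extending `ψ` in `F` to `N_ψ` and composing with `σ^i` extends `φ` in `F̃`.
-/

section

variable {P : Type*} [Group P]

lemma Subgroup.card_normalizer_map_mulAut (S : Subgroup P) (τ : MulAut P) :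
    Nat.card (Subgroup.normalizer (S.map τ.toMonoidHom : Set P)) =
      Nat.card (Subgroup.normalizer (S : Set P)) := by
  rw [← Subgroup.map_equiv_normalizer_eq, Subgroup.card_map_of_injective τ.injective]

namespace FusionSystem

variable (F : FusionSystem P)

lemma inclusion_mem {S T : Subgroup P} (h : S ≤ T) : Subgroup.inclusion h ∈ F.Hom S T := by
  convert F.conj_mem 1 S T fun q hq => by simpa using h hq
  ext
  simp [conjHom]

lemma IsIso.trans {F : FusionSystem P} {Q R S : Subgroup P} :
    F.IsIso Q R → F.IsIso R S → F.IsIso Q S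
  | ⟨φ, hφ, hφ_surj⟩, ⟨ψ, hψ, hψ_surj⟩ => ⟨ψ.comp φ, F.comp_mem _ hφ _ hψ, hψ_surj.comp hφ_surj⟩

def autSubmonoid : Submonoid (MulAut P) where
  carrier := {τ | topHom τ ∈ F.Hom ⊤ ⊤}
  one_mem' := F.inclusion_mem le_rfl
  mul_mem' hσ hτ := F.comp_mem _ hτ _ hσ

variable {F}

lemma zpow_mem_autSubmonoid [Finite P] {σ : MulAut P} (hσ : σ ∈ F.autSubmonoid) (i : ℤ) :
    σ ^ i ∈ F.autSubmonoid := by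
  obtain ⟨n, hn⟩ := mem_powers_iff_mem_zpowers.2 (Subgroup.zpow_mem_zpowers σ i)
  exact hn ▸ pow_mem hσ n

lemma isIso_map {τ : MulAut P} (hτ : τ ∈ F.autSubmonoid) (S : Subgroup P) :
    F.IsIso S (S.map τ.toMonoidHom) := by
  set ρ : S →* (⊤ : Subgroup P) := (topHom τ).comp (Subgroup.inclusion le_top)
  have hρ : ρ ∈ F.Hom S ⊤ := F.comp_mem _ (F.inclusion_mem le_top) _ hτ
  have himg : imgSubgroup ρ = S.map τ.toMonoidHom := by
    ext x
    simp [imgSubgroup, ρ, topHom]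
  exact himg ▸ ⟨corestrict ρ, F.restrict_mem _ hρ, MonoidHom.rangeRestrict_surjective _⟩

lemma FullyNormalized.map {S : Subgroup P} (hS : F.FullyNormalized S) {τ : MulAut P}
    (hτ : τ ∈ F.autSubmonoid) : F.FullyNormalized (S.map τ.toMonoidHom) := by
  intro Q' hQ'
  rw [Subgroup.card_normalizer_map_mulAut]
  exact hS Q' ((isIso_map hτ S).trans hQ')

end FusionSystem

section TwistedMorphisms

variable {Q R R' : Subgroup P} {φ : Q →* R} {ψ : Q →* R'} {τ : MulAut P}

lemma imgSubgroup_eq_map_of_apply_eq (h : ∀ q, (φ q : P) = τ (ψ q)) :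
    imgSubgroup φ = (imgSubgroup ψ).map τ.toMonoidHom := by
  ext x
  simp [imgSubgroup, h]

lemma NphiSet_subset_of_apply_eq (h : ∀ q, (φ q : P) = τ (ψ q)) : NphiSet φ ⊆ NphiSet ψ := by
  rintro y ⟨hy, hyN, z, hz, hconj⟩
  rw [imgSubgroup_eq_map_of_apply_eq h, ← Subgroup.map_equiv_normalizer_eq,
    Subgroup.mem_map_equiv] at hz
  refine ⟨hy, hyN, τ.symm z, hz, fun q hq => τ.injective ?_⟩
  simpa [← h] using hconj q hq

lemma NphiSet_eq_of_apply_eq (h : ∀ q, (φ q : P) = τ (ψ q)) : NphiSet φ = NphiSet ψ :=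
  (NphiSet_subset_of_apply_eq h).antisymm
    (NphiSet_subset_of_apply_eq (τ := τ⁻¹) fun q => by rw [h, MulAut.inv_apply_self])

end TwistedMorphisms

end

theorem extension_axiom_of_generated_general
    (P : Type*) [Group P] [Finite P]
    (F Ftilde : FusionSystem P) (hle : FusionSystem.LE F Ftilde)
    (σ : MulAut P) (hσ : topHom σ ∈ Ftilde.Hom ⊤ ⊤)
    (hfact : ∀ (Q : Subgroup P), ∀ φ ∈ Ftilde.Hom Q ⊤,
      ∃ (i : ℤ) (ψ : ↥Q →* ↥(⊤ : Subgroup P)), ψ ∈ F.Hom Q ⊤ ∧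
        ∀ q : ↥Q, (φ q : P) = (σ ^ i) (ψ q : P))
    (hnorm : ∀ Q : Subgroup P, F.FullyNormalized Q ↔ Ftilde.FullyNormalized Q)
    (hext : F.ExtensionAxiom) :
    Ftilde.ExtensionAxiom := by
  intro Q φ hφ hφ_normalized N hN
  obtain ⟨i, ψ, hψ, hφψ⟩ := hfact Q φ hφ
  have hσ_zpow : ∀ j : ℤ, σ ^ j ∈ Ftilde.autSubmonoid :=
    FusionSystem.zpow_mem_autSubmonoid hσ
  have hψφ : ∀ q, (ψ q : P) = (σ ^ (-i)) (φ q) := fun q => by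
    rw [hφψ, zpow_neg, MulAut.inv_apply_self]
  have hψ_normalized : F.FullyNormalized (imgSubgroup ψ) := by
    rw [hnorm, imgSubgroup_eq_map_of_apply_eq hψφ]
    exact hφ_normalized.map (hσ_zpow (-i))
  obtain ⟨χ, hχ, hχψ⟩ := hext Q ψ hψ hψ_normalized N (hN.trans (NphiSet_eq_of_apply_eq hφψ))
  refine ⟨(topHom (σ ^ i)).comp χ, Ftilde.comp_mem _ (hle _ _ hχ) _ (hσ_zpow i),
    fun q hq hq' => ?_⟩
  change (σ ^ i) (χ ⟨q, hq'⟩ : P) = _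
  rw [hχψ, hφψ]

/-- Let `F ⊆ F̃` be fusion systems over a finite `p`-group `P` with
`F̃ = ⟨F, σ⟩` for some `σ ∈ Aut_F̃(P)`, such that every `φ ∈ Hom_F̃(Q,P)` factors as `σ^i ∘ ψ`
with `ψ ∈ Hom_F(Q,P)`, and such that fully normalized subgroups for `F` and `F̃` coincide.
If `F` satisfies the extension axiom, then so does `F̃`. -/
theorem extension_axiom_of_generated
    (p : ℕ) [Fact p.Prime] (P : Type*) [Group P] [Finite P] (hP : IsPGroup p P)
    (F Ftilde : FusionSystem P) (hle : FusionSystem.LE F Ftilde)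
    (σ : MulAut P) (hσ : topHom σ ∈ Ftilde.Hom ⊤ ⊤)
    (hgen : ∀ F' : FusionSystem P, FusionSystem.LE F F' → topHom σ ∈ F'.Hom ⊤ ⊤ →
      FusionSystem.LE Ftilde F')
    (hfact : ∀ (Q : Subgroup P), ∀ φ ∈ Ftilde.Hom Q ⊤,
      ∃ (i : ℤ) (ψ : ↥Q →* ↥(⊤ : Subgroup P)), ψ ∈ F.Hom Q ⊤ ∧
        ∀ q : ↥Q, (φ q : P) = (σ ^ i) (ψ q : P))
    (hnorm : ∀ Q : Subgroup P, F.FullyNormalized Q ↔ Ftilde.FullyNormalized Q)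
    (hext : F.ExtensionAxiom) :
    Ftilde.ExtensionAxiom :=
  extension_axiom_of_generated_general P F Ftilde hle σ hσ hfact hnorm hext
end
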